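/- arXiv:1302.1249 — 5 statements merged into one kernel-verified Lean document; each statement's English description precedes it below -/
import Mathlib

section
/- Let φ be a solution of EQ_{λ,n,q} on (0,∞). Then the energy E(t) = (1/2)·φ'(t)² − (λ/2)·φ(t)² + |φ(t)|^{q+1}/(q+1) is differentiable on (0,∞) with E'(t) = −(n−1)·((e^{2t}+1)/(e^{2t}−1))·φ'(t)² ≤ 0 for every t > 0; in particular, E is monotone nonincreasing on (0,∞). -/
/-!
Write the energy as `E = ½ φ'² + G(φ)` with potential `G(y) = |y|^{q+1}/(q+1) − (λ/2) y²`, so that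
`G'(y) = |y|^{q−1} y − λ y` is exactly minus the right-hand side of the equation. By the chain
rule `E' = φ' (φ'' + G'(φ))`, and the equation turns this into the friction term
`−(n−1) coth(t) φ'²`, which is nonpositive since `coth t = (e^{2t}+1)/(e^{2t}−1) > 0` for `t > 0`.
Monotonicity then follows from the mean value theorem.
-/

open Real Set

noncomputable def yamabePotential (lam q y : ℝ) : ℝ :=
  |y| ^ (q + 1) / (q + 1) - lam / 2 * y ^ 2

theorem hasDerivAt_yamabePotential (lam : ℝ) {q : ℝ} (hq : 0 < q) (y : ℝ) :
    HasDerivAt (yamabePotential lam q) (|y| ^ (q - 1) * y - lam * y) y := by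
  refine (((hasDerivAt_abs_rpow y (by linarith : 1 < q + 1)).div_const (q + 1)).sub
    ((hasDerivAt_pow 2 y).const_mul (lam / 2))).congr_deriv ?_
  have : q + 1 ≠ 0 := by linarith
  rw [show q + 1 - 2 = q - 1 by ring]
  field_simp
  ring

theorem hasDerivAt_half_sq_add_comp {φ φ' G : ℝ → ℝ} {t φ'' g : ℝ}
    (hφ : HasDerivAt φ (φ' t) t) (hφ' : HasDerivAt φ' φ'' t) (hG : HasDerivAt G g (φ t)) :
    HasDerivAt (fun s => 1 / 2 * φ' s ^ 2 + G (φ s)) (φ' t * (φ'' + g)) t :=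
  (((hφ'.pow 2).const_mul (1 / 2)).add (hG.comp t hφ)).congr_deriv (by ring)

theorem exp_add_one_div_exp_sub_one_pos {x : ℝ} (hx : 0 < x) :
    0 < (exp x + 1) / (exp x - 1) :=
  div_pos (by positivity) (sub_pos.mpr (one_lt_exp_iff.mpr hx))

/-- Along any solution φ of EQ_{λ,n,q} on (0,∞), the energy
E(t) = (1/2)φ'(t)² − (λ/2)φ(t)² + |φ(t)|^{q+1}/(q+1) is differentiable with
E'(t) = −(n−1)((e^{2t}+1)/(e^{2t}−1))φ'(t)² ≤ 0, hence E is nonincreasing on (0,∞). -/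
theorem energy_monotone
    (n : ℕ) (hn : 2 ≤ n) (lam q : ℝ) (hq : 1 < q)
    (φ φ' φ'' : ℝ → ℝ)
    (hd1 : ∀ t ∈ Ioi (0:ℝ), HasDerivAt φ (φ' t) t)
    (hd2 : ∀ t ∈ Ioi (0:ℝ), HasDerivAt φ' (φ'' t) t)
    (hode : ∀ t ∈ Ioi (0:ℝ),
      φ'' t + ((n : ℝ) - 1) * ((exp (2*t) + 1) / (exp (2*t) - 1)) * φ' t
        = lam * φ t - |φ t| ^ (q - 1) * φ t)
    (E : ℝ → ℝ)
    (hE : ∀ t, E t = (1/2) * (φ' t)^2 - (lam/2) * (φ t)^2 + |φ t| ^ (q + 1) / (q + 1)) :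
    (∀ t ∈ Ioi (0:ℝ),
      HasDerivAt E (-((n : ℝ) - 1) * ((exp (2*t) + 1) / (exp (2*t) - 1)) * (φ' t)^2) t ∧
      -((n : ℝ) - 1) * ((exp (2*t) + 1) / (exp (2*t) - 1)) * (φ' t)^2 ≤ 0) ∧
    AntitoneOn E (Ioi (0:ℝ)) := by
  have hE_eq : E = fun s => 1 / 2 * φ' s ^ 2 + yamabePotential lam q (φ s) := by
    funext s; rw [hE, yamabePotential]; ring
  have hderiv : ∀ t ∈ Ioi (0:ℝ),
      HasDerivAt E (-((n : ℝ) - 1) * ((exp (2*t) + 1) / (exp (2*t) - 1)) * (φ' t)^2) t := by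
    intro t ht
    rw [hE_eq]
    convert hasDerivAt_half_sq_add_comp (hd1 t ht) (hd2 t ht)
      (hasDerivAt_yamabePotential lam (by linarith) (φ t)) using 1
    linear_combination -(φ' t) * hode t ht
  have hnonpos : ∀ t ∈ Ioi (0:ℝ),
      -((n : ℝ) - 1) * ((exp (2*t) + 1) / (exp (2*t) - 1)) * (φ' t)^2 ≤ 0 := by
    intro t ht
    have hn1 : (0:ℝ) ≤ (n : ℝ) - 1 := sub_nonneg.mpr (by exact_mod_cast (by omega : 1 ≤ n))
    have hcoth := exp_add_one_div_exp_sub_one_pos (mul_pos two_pos (mem_Ioi.mp ht))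
    have := mul_nonneg (mul_nonneg hn1 hcoth.le) (sq_nonneg (φ' t))
    linarith
  refine ⟨fun t ht => ⟨hderiv t ht, hnonpos t ht⟩, ?_⟩
  refine antitoneOn_of_hasDerivWithinAt_nonpos (convex_Ioi 0)
    (f' := fun t => -((n : ℝ) - 1) * ((exp (2*t) + 1) / (exp (2*t) - 1)) * (φ' t)^2)
    (fun t ht => (hderiv t ht).continuousAt.continuousWithinAt) ?_ ?_
  · simpa only [interior_Ioi] using fun t ht => (hderiv t ht).hasDerivWithinAt
  · simpa only [interior_Ioi] using hnonpos
end

section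
/- Let φ be a solution of EQ_{λ,n,q} on (0,∞) and let b > 0 be a first zero of φ, i.e., φ(t) > 0 for all t ∈ (0,b) and φ(b) = 0. Then φ'(b) < 0, and consequently the energy satisfies E(b) = (1/2)·φ'(b)² > 0. -/
open Real Set

/-!
Since `φ > 0 = φ b` to the left of `b`, the left difference quotients at `b` are `≤ 0`, so
`φ' b ≤ 0`. If `φ' b = 0`, then `(φ, φ')` vanishes at `b`. On `[b/2, b]` the equation is
linear in `(φ, φ')` once `|φ|^(q-1)` and `(n-1) coth t` are read as continuous, hence bounded,
coefficients, so Grönwall's inequality run backwards from `b` forces `φ = 0` there,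
contradicting `φ > 0` on `(0, b)`.
-/

theorem HasDerivAt.nonpos_of_le_left {f : ℝ → ℝ} {f' a b : ℝ} (hf : HasDerivAt f f' b)
    (hab : a < b) (hle : ∀ t ∈ Ioo a b, f b ≤ f t) : f' ≤ 0 := by
  refine le_of_tendsto (hasDerivAt_iff_tendsto_slope_left_right.1 hf).1 ?_
  filter_upwards [Ioo_mem_nhdsLT hab] with t ht
  rw [slope_def_field]
  exact div_nonpos_of_nonneg_of_nonpos (sub_nonneg.2 (hle t ht)) (sub_nonpos.2 ht.2.le)

theorem eq_zero_of_norm_deriv_le_mul_norm_of_eq_zero_left {E : Type*} [NormedAddCommGroup E]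
    [NormedSpace ℝ E] {f f' : ℝ → E} {K a b : ℝ} (hf : ContinuousOn f (Icc a b))
    (hf' : ∀ x ∈ Ioc a b, HasDerivWithinAt f (f' x) (Iic x) x) (hb : f b = 0)
    (bound : ∀ x ∈ Ioc a b, ‖f' x‖ ≤ K * ‖f x‖) :
    ∀ x ∈ Icc a b, f x = 0 := by
  have hneg : ∀ x ∈ Icc (-b) (-a), -x ∈ Icc a b :=
    fun x hx => ⟨by linarith [hx.2], by linarith [hx.1]⟩
  have hreflected := eq_zero_of_abs_deriv_le_mul_abs_self_of_eq_zero_right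
    (f := fun x => f (-x)) (f' := fun x => -f' (-x)) (K := K) (a := -b) (b := -a)
    (hf.comp continuousOn_neg hneg)
    (fun x hx => by
      have h := (hf' (-x) ⟨by linarith [hx.2], by linarith [hx.1]⟩).scomp x
        (hasDerivWithinAt_neg x (Ici x)) (fun y (hy : x ≤ y) => show -y ≤ -x by linarith)
      simpa [Function.comp_def] using h)
    (by simpa using hb)
    (fun x hx => by simpa using bound (-x) ⟨by linarith [hx.2], by linarith [hx.1]⟩)
  intro x hx
  simpa using hreflected (-x) ⟨by linarith [hx.2], by linarith [hx.1]⟩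

theorem eq_zero_of_second_order_linear_of_eq_zero_left {y y' y'' p r : ℝ → ℝ} {a b : ℝ}
    (hy : ∀ t ∈ Icc a b, HasDerivAt y (y' t) t)
    (hy' : ∀ t ∈ Icc a b, HasDerivAt y' (y'' t) t)
    (hp : ContinuousOn p (Icc a b)) (hr : ContinuousOn r (Icc a b))
    (hode : ∀ t ∈ Icc a b, y'' t = p t * y t + r t * y' t) (hyb : y b = 0) (hy'b : y' b = 0) :
    ∀ t ∈ Icc a b, y t = 0 := by
  obtain ⟨P, hP⟩ := isCompact_Icc.exists_bound_of_continuousOn hp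
  obtain ⟨R, hR⟩ := isCompact_Icc.exists_bound_of_continuousOn hr
  have hpair : ∀ t ∈ Icc a b, HasDerivAt (fun s => (y s, y' s)) (y' t, y'' t) t :=
    fun t ht => (hy t ht).prodMk (hy' t ht)
  have bound : ∀ t ∈ Ioc a b, ‖(y' t, y'' t)‖ ≤ (1 + P + R) * ‖(y t, y' t)‖ := by
    intro t ht
    have ht' : t ∈ Icc a b := Ioc_subset_Icc_self ht
    have hy_le : ‖y t‖ ≤ ‖(y t, y' t)‖ := norm_fst_le (y t, y' t)
    have hy'_le : ‖y' t‖ ≤ ‖(y t, y' t)‖ := norm_snd_le (y t, y' t)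
    have hP0 : 0 ≤ P := (norm_nonneg _).trans (hP t ht')
    have hR0 : 0 ≤ R := (norm_nonneg _).trans (hR t ht')
    have hy''_le : ‖y'' t‖ ≤ (P + R) * ‖(y t, y' t)‖ := calc
      ‖y'' t‖ ≤ ‖p t‖ * ‖y t‖ + ‖r t‖ * ‖y' t‖ := by
        rw [hode t ht', ← norm_mul, ← norm_mul]; exact norm_add_le _ _
      _ ≤ P * ‖(y t, y' t)‖ + R * ‖(y t, y' t)‖ := by
        gcongr
        · exact hP t ht'
        · exact hR t ht'
      _ = (P + R) * ‖(y t, y' t)‖ := by ring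
    rw [Prod.norm_def]
    have hnorm := norm_nonneg (y t, y' t)
    exact max_le (by nlinarith) (by nlinarith)
  intro t ht
  have hpair_zero := eq_zero_of_norm_deriv_le_mul_norm_of_eq_zero_left
    (fun s hs => (hpair s hs).continuousAt.continuousWithinAt)
    (fun s hs => (hpair s (Ioc_subset_Icc_self hs)).hasDerivWithinAt)
    (by simp [hyb, hy'b]) bound t ht
  exact congrArg Prod.fst hpair_zero

structure IsRadialYamabeSolution (n : ℕ) (lam q : ℝ) (φ φ' φ'' : ℝ → ℝ) : Prop where
  hasDerivAt : ∀ t ∈ Ioi (0:ℝ), HasDerivAt φ (φ' t) t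
  hasDerivAt_deriv : ∀ t ∈ Ioi (0:ℝ), HasDerivAt φ' (φ'' t) t
  ode : ∀ t ∈ Ioi (0:ℝ),
    φ'' t + ((n : ℝ) - 1) * ((exp (2*t) + 1) / (exp (2*t) - 1)) * φ' t
      = lam * φ t - |φ t| ^ (q - 1) * φ t

theorem continuousOn_exp_two_mul_add_one_div_sub_one :
    ContinuousOn (fun t => (exp (2*t) + 1) / (exp (2*t) - 1)) (Ioi 0) := by
  refine (Continuous.continuousOn (by fun_prop)).div (Continuous.continuousOn (by fun_prop)) ?_
  intro t ht
  exact sub_ne_zero.2 (one_lt_exp_iff.2 (by simpa using ht)).ne'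

namespace IsRadialYamabeSolution

variable {n : ℕ} {lam q : ℝ} {φ φ' φ'' : ℝ → ℝ}

theorem eq_zero_of_eq_zero_of_deriv_eq_zero (sol : IsRadialYamabeSolution n lam q φ φ' φ'')
    (hq : 1 ≤ q) {a b : ℝ} (ha : 0 < a) (hb : φ b = 0) (hb' : φ' b = 0) :
    ∀ t ∈ Icc a b, φ t = 0 := by
  have hpos : Icc a b ⊆ Ioi 0 := fun t ht => ha.trans_le ht.1
  refine eq_zero_of_second_order_linear_of_eq_zero_left (y'' := φ'')
    (p := fun t => lam - |φ t| ^ (q - 1))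
    (r := fun t => -(((n : ℝ) - 1) * ((exp (2*t) + 1) / (exp (2*t) - 1))))
    (fun t ht => sol.hasDerivAt t (hpos ht)) (fun t ht => sol.hasDerivAt_deriv t (hpos ht))
    ?_ ?_ (fun t ht => by linarith [sol.ode t (hpos ht)]) hb hb'
  · exact fun t ht => (continuousAt_const.sub
      ((sol.hasDerivAt t (hpos ht)).continuousAt.abs.rpow_const
        (Or.inr (sub_nonneg.2 hq)))).continuousWithinAt
  · exact ((continuousOn_exp_two_mul_add_one_div_sub_one.const_smul ((n : ℝ) - 1)).neg).mono hpos

end IsRadialYamabeSolution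

theorem first_zero_negative_slope_general
    (n : ℕ) (lam q : ℝ) (hq : 1 < q)
    (φ φ' φ'' : ℝ → ℝ)
    (hd1 : ∀ t ∈ Ioi (0:ℝ), HasDerivAt φ (φ' t) t)
    (hd2 : ∀ t ∈ Ioi (0:ℝ), HasDerivAt φ' (φ'' t) t)
    (hode : ∀ t ∈ Ioi (0:ℝ),
      φ'' t + ((n : ℝ) - 1) * ((exp (2*t) + 1) / (exp (2*t) - 1)) * φ' t
        = lam * φ t - |φ t| ^ (q - 1) * φ t)
    (E : ℝ → ℝ)
    (hE : ∀ t, E t = (1/2) * (φ' t)^2 - (lam/2) * (φ t)^2 + |φ t| ^ (q + 1) / (q + 1))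
    (b : ℝ) (hb : 0 < b) (hpos : ∀ t ∈ Ioo (0:ℝ) b, 0 < φ t) (hzero : φ b = 0) :
    φ' b < 0 ∧ E b = (1/2) * (φ' b)^2 ∧ 0 < E b := by
  have sol : IsRadialYamabeSolution n lam q φ φ' φ'' := ⟨hd1, hd2, hode⟩
  have hle : φ' b ≤ 0 :=
    (hd1 b hb).nonpos_of_le_left hb fun t ht => hzero ▸ (hpos t ht).le
  have hne : φ' b ≠ 0 := fun hderiv_zero =>
    (hpos (b / 2) ⟨half_pos hb, half_lt_self hb⟩).ne'
      (sol.eq_zero_of_eq_zero_of_deriv_eq_zero hq.le (half_pos hb) hzero hderiv_zero (b / 2)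
        ⟨le_rfl, half_le_self hb.le⟩)
  have hlt : φ' b < 0 := lt_of_le_of_ne hle hne
  have hEb : E b = (1/2) * (φ' b)^2 := by
    rw [hE b, hzero, abs_zero, zero_rpow (by linarith)]
    ring
  exact ⟨hlt, hEb, by rw [hEb]; nlinarith⟩

/-- At a first zero b of a solution φ of EQ_{λ,n,q} (φ > 0 on (0,b), φ(b) = 0),
one has φ'(b) < 0 and the energy satisfies E(b) = (1/2)φ'(b)² > 0. -/
theorem first_zero_negative_slope
    (n : ℕ) (hn : 2 ≤ n) (lam q : ℝ) (hq : 1 < q)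
    (φ φ' φ'' : ℝ → ℝ)
    (hd1 : ∀ t ∈ Ioi (0:ℝ), HasDerivAt φ (φ' t) t)
    (hd2 : ∀ t ∈ Ioi (0:ℝ), HasDerivAt φ' (φ'' t) t)
    (hode : ∀ t ∈ Ioi (0:ℝ),
      φ'' t + ((n : ℝ) - 1) * ((exp (2*t) + 1) / (exp (2*t) - 1)) * φ' t
        = lam * φ t - |φ t| ^ (q - 1) * φ t)
    (E : ℝ → ℝ)
    (hE : ∀ t, E t = (1/2) * (φ' t)^2 - (lam/2) * (φ t)^2 + |φ t| ^ (q + 1) / (q + 1))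
    (b : ℝ) (hb : 0 < b) (hpos : ∀ t ∈ Ioo (0:ℝ) b, 0 < φ t) (hzero : φ b = 0) :
    φ' b < 0 ∧ E b = (1/2) * (φ' b)^2 ∧ 0 < E b :=
  first_zero_negative_slope_general n lam q hq φ φ' φ'' hd1 hd2 hode E hE b hb hpos hzero
end

section
/- Assume λ ≤ 0 and let φ be a solution of EQ_{λ,n,q} on (0,∞) that is not identically zero. If t₀ ∈ (0,∞) is a local minimum point of φ, then φ(t₀) < 0; if t₀ ∈ (0,∞) is a local maximum point of φ, then φ(t₀) > 0. -/
/-!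
At an interior extremum `t₀` we have `φ'(t₀) = 0`, so the equation reads
`φ''(t₀) = (λ - |φ(t₀)|^(q-1)) φ(t₀)`. For `λ ≤ 0` the factor is negative as soon as
`φ(t₀) ≠ 0`, so `φ''(t₀)` has the sign opposite to `φ(t₀)`, which forbids a minimum with
`φ(t₀) > 0` and a maximum with `φ(t₀) < 0`. The case `φ(t₀) = 0` is excluded by uniqueness:
along the given solution the equation is the linear equation
`φ'' + (n-1) coth t · φ' = (λ - |φ|^(q-1)) φ` with continuous coefficients, and a solution of
it with vanishing Cauchy data at `t₀` vanishes identically.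
-/

open Real Set Filter Topology

theorem eqOn_zero_of_hasDerivAt_clm_apply {E : Type*} [NormedAddCommGroup E] [NormedSpace ℝ E]
    {A : ℝ → E →L[ℝ] E} {x : ℝ → E} {a b s : ℝ} (hA : ContinuousOn A (Icc a b))
    (hx : ContinuousOn x (Icc a b)) (hx' : ∀ t ∈ Ioo a b, HasDerivAt x (A t (x t)) t)
    (hs : s ∈ Ioo a b) (hxs : x s = 0) : EqOn x 0 (Icc a b) := by
  obtain ⟨M, hM⟩ := isCompact_Icc.exists_bound_of_continuousOn hA
  refine ODE_solution_unique_of_mem_Icc (v := fun t ↦ A t) (s := fun _ ↦ univ)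
    (K := M.toNNReal) (fun t ht ↦ ?_) hs hx hx' (fun _ _ ↦ mem_univ _) continuousOn_const
    (fun t _ ↦ by simp) (fun _ _ ↦ mem_univ _) hxs
  refine ((A t).lipschitz.weaken ?_).lipschitzOnWith
  rw [← NNReal.coe_le_coe, coe_nnnorm]
  exact (hM t (Ioo_subset_Icc_self ht)).trans (le_coe_toNNReal M)

open ContinuousLinearMap in
theorem eqOn_zero_of_second_order_linear {u u' u'' p c : ℝ → ℝ} {a b s : ℝ}
    (hp : ContinuousOn p (Icc a b)) (hc : ContinuousOn c (Icc a b))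
    (hu : ∀ t ∈ Icc a b, HasDerivAt u (u' t) t) (hu' : ∀ t ∈ Icc a b, HasDerivAt u' (u'' t) t)
    (hode : ∀ t ∈ Icc a b, u'' t + p t * u' t = c t * u t)
    (hs : s ∈ Ioo a b) (hus : u s = 0) (hus' : u' s = 0) : EqOn u 0 (Icc a b) := by
  let A : ℝ → ℝ × ℝ →L[ℝ] ℝ × ℝ := fun t ↦
    inl ℝ ℝ ℝ ∘L snd ℝ ℝ ℝ + c t • (inr ℝ ℝ ℝ ∘L fst ℝ ℝ ℝ) - p t • (inr ℝ ℝ ℝ ∘L snd ℝ ℝ ℝ)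
  have hA : ContinuousOn A (Icc a b) :=
    (continuousOn_const.add (hc.smul continuousOn_const)).sub (hp.smul continuousOn_const)
  have hx : ∀ t ∈ Icc a b, HasDerivAt (fun t ↦ (u t, u' t)) (A t (u t, u' t)) t := by
    intro t ht
    convert (hu t ht).prodMk (hu' t ht) using 1
    simp [A, ← hode t ht]
  intro t ht
  have hxt := eqOn_zero_of_hasDerivAt_clm_apply hA (HasDerivAt.continuousOn hx)
    (fun t ht ↦ hx t (Ioo_subset_Icc_self ht)) hs (by simp [hus, hus']) ht
  exact congrArg Prod.fst hxt

theorem IsLocalMin.nonneg_of_hasDerivAt_of_hasDerivAt {f f' : ℝ → ℝ} {f'' x : ℝ}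
    (h : IsLocalMin f x) (hf : ∀ᶠ y in 𝓝 x, HasDerivAt f (f' y) y)
    (hf' : HasDerivAt f' f'' x) : 0 ≤ f'' := by
  by_contra! hneg
  have hx : f' x = 0 := h.hasDerivAt_eq_zero hf.self_of_nhds
  have hslope : ∀ᶠ y in 𝓝[>] x, slope f' x y < 0 :=
    nhdsGT_le_nhdsNE x
      ((hasDerivAt_iff_tendsto_slope.mp hf').eventually (eventually_lt_nhds hneg))
  obtain ⟨u, hxu, hu⟩ := mem_nhdsGT_iff_exists_Ioc_subset.mp <| hslope.and <|
    (hf.filter_mono nhdsWithin_le_nhds).and (h.filter_mono nhdsWithin_le_nhds)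
  have hxu : x < u := hxu
  have hderiv : ∀ y ∈ Icc x u, HasDerivAt f (f' y) y := fun y hy ↦ by
    rcases hy.1.eq_or_lt with rfl | hy'
    · exact hf.self_of_nhds
    · exact (hu ⟨hy', hy.2⟩).2.1
  obtain ⟨c, hc, hfc⟩ := exists_hasDerivAt_eq_slope f f' hxu
    (HasDerivAt.continuousOn hderiv) fun y hy ↦ hderiv y (Ioo_subset_Icc_self hy)
  have hf'c : f' c < 0 := by
    have := (hu (Ioo_subset_Ioc_self hc)).1
    rwa [slope_def_field, hx, sub_zero, div_lt_iff₀ (sub_pos.mpr hc.1), zero_mul] at this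
  have : 0 ≤ (f u - f x) / (u - x) :=
    div_nonneg (sub_nonneg.mpr (hu ⟨hxu, le_rfl⟩).2.2) (sub_nonneg.mpr hxu.le)
  linarith

structure IsRadialYamabeSolution_s3 (n : ℕ) (lam q : ℝ) (φ φ' φ'' : ℝ → ℝ) : Prop where
  hasDerivAt : ∀ t ∈ Ioi (0 : ℝ), HasDerivAt φ (φ' t) t
  hasDerivAt_deriv : ∀ t ∈ Ioi (0 : ℝ), HasDerivAt φ' (φ'' t) t
  ode : ∀ t ∈ Ioi (0 : ℝ),
    φ'' t + ((n : ℝ) - 1) * ((exp (2 * t) + 1) / (exp (2 * t) - 1)) * φ' t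
      = lam * φ t - |φ t| ^ (q - 1) * φ t

namespace IsRadialYamabeSolution_s3

variable {n : ℕ} {lam q : ℝ} {φ φ' φ'' : ℝ → ℝ}

theorem neg (hφ : IsRadialYamabeSolution_s3 n lam q φ φ' φ'') :
    IsRadialYamabeSolution_s3 n lam q (-φ) (-φ') (-φ'') where
  hasDerivAt t ht := (hφ.hasDerivAt t ht).neg
  hasDerivAt_deriv t ht := (hφ.hasDerivAt_deriv t ht).neg
  ode t ht := by
    simp only [Pi.neg_apply, abs_neg]
    linarith [hφ.ode t ht]

theorem eqOn_zero_of_eq_zero_of_deriv_eq_zero (hφ : IsRadialYamabeSolution_s3 n lam q φ φ' φ'')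
    (hq : 1 ≤ q) {s : ℝ} (hs : 0 < s) (hφs : φ s = 0) (hφ's : φ' s = 0) :
    EqOn φ 0 (Ioi 0) := by
  intro τ (hτ : 0 < τ)
  have hsub : Icc (min s τ / 2) (max s τ + 1) ⊆ Ioi 0 :=
    fun t ht ↦ lt_of_lt_of_le (by positivity) ht.1
  have hcoeff : ContinuousOn (fun t ↦ ((n : ℝ) - 1) * ((exp (2 * t) + 1) / (exp (2 * t) - 1)))
      (Ioi 0) := by
    refine continuousOn_const.mul (ContinuousOn.div (by fun_prop) (by fun_prop) fun t ht ↦ ?_)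
    exact (sub_pos.mpr (one_lt_exp_iff.mpr (by linarith [mem_Ioi.mp ht]))).ne'
  have hpot : ContinuousOn (fun t ↦ lam - |φ t| ^ (q - 1)) (Ioi 0) :=
    continuousOn_const.sub <| (HasDerivAt.continuousOn hφ.hasDerivAt).abs.rpow_const
      fun _ _ ↦ Or.inr (sub_nonneg.mpr hq)
  refine eqOn_zero_of_second_order_linear (hcoeff.mono hsub) (hpot.mono hsub)
    (fun t ht ↦ hφ.hasDerivAt t (hsub ht)) (fun t ht ↦ hφ.hasDerivAt_deriv t (hsub ht))
    (fun t ht ↦ ?_) ?_ hφs hφ's ⟨?_, ?_⟩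
  · linarith [hφ.ode t (hsub ht)]
  · exact ⟨by linarith [min_le_left s τ, lt_min hs hτ], by linarith [le_max_left s τ]⟩
  · linarith [min_le_right s τ, lt_min hs hτ]
  · linarith [le_max_right s τ]

theorem lt_zero_of_isLocalMin (hφ : IsRadialYamabeSolution_s3 n lam q φ φ' φ'') (hq : 1 ≤ q)
    (hlam : lam ≤ 0) (hφ0 : ¬ EqOn φ 0 (Ioi 0)) {t₀ : ℝ} (ht₀ : 0 < t₀)
    (hmin : IsLocalMin φ t₀) : φ t₀ < 0 := by
  by_contra! hnonneg
  have hφ't₀ : φ' t₀ = 0 := hmin.hasDerivAt_eq_zero (hφ.hasDerivAt t₀ ht₀)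
  rcases hnonneg.eq_or_lt with hzero | hpos
  · exact hφ0 (hφ.eqOn_zero_of_eq_zero_of_deriv_eq_zero hq ht₀ hzero.symm hφ't₀)
  · have hφ''t₀ : φ'' t₀ < 0 := by
      have hode := hφ.ode t₀ ht₀
      have : 0 < |φ t₀| ^ (q - 1) * φ t₀ := by positivity
      rw [hφ't₀, mul_zero, add_zero] at hode
      nlinarith
    have := hmin.nonneg_of_hasDerivAt_of_hasDerivAt
      (eventually_of_mem (Ioi_mem_nhds ht₀) hφ.hasDerivAt) (hφ.hasDerivAt_deriv t₀ ht₀)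
    linarith

theorem pos_of_isLocalMax (hφ : IsRadialYamabeSolution_s3 n lam q φ φ' φ'') (hq : 1 ≤ q)
    (hlam : lam ≤ 0) (hφ0 : ¬ EqOn φ 0 (Ioi 0)) {t₀ : ℝ} (ht₀ : 0 < t₀)
    (hmax : IsLocalMax φ t₀) : 0 < φ t₀ := by
  have hnegφ0 : ¬ EqOn (-φ) 0 (Ioi 0) := fun h ↦ hφ0 fun t ht ↦ neg_eq_zero.mp (h ht)
  simpa using hφ.neg.lt_zero_of_isLocalMin hq hlam hnegφ0 ht₀ hmax.neg

end IsRadialYamabeSolution_s3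

theorem local_extrema_sign_nonpositive_lambda_general
    (n : ℕ) (lam q : ℝ) (hq : 1 < q) (hlam : lam ≤ 0)
    (φ φ' φ'' : ℝ → ℝ)
    (hd1 : ∀ t ∈ Ioi (0:ℝ), HasDerivAt φ (φ' t) t)
    (hd2 : ∀ t ∈ Ioi (0:ℝ), HasDerivAt φ' (φ'' t) t)
    (hode : ∀ t ∈ Ioi (0:ℝ),
      φ'' t + ((n : ℝ) - 1) * ((exp (2*t) + 1) / (exp (2*t) - 1)) * φ' t
        = lam * φ t - |φ t| ^ (q - 1) * φ t)
    (hnontriv : ¬ (∀ t ∈ Ioi (0:ℝ), φ t = 0))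
    (t₀ : ℝ) (ht₀ : 0 < t₀) :
    (IsLocalMin φ t₀ → φ t₀ < 0) ∧ (IsLocalMax φ t₀ → 0 < φ t₀) := by
  have hφ : IsRadialYamabeSolution_s3 n lam q φ φ' φ'' := ⟨hd1, hd2, hode⟩
  have hφ0 : ¬ EqOn φ 0 (Ioi 0) := fun h ↦ hnontriv fun t ht ↦ h ht
  exact ⟨hφ.lt_zero_of_isLocalMin hq.le hlam hφ0 ht₀, hφ.pos_of_isLocalMax hq.le hlam hφ0 ht₀⟩

/-- For λ ≤ 0 and a not-identically-zero solution φ of EQ_{λ,n,q} on (0,∞):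
at a local minimum point t₀ > 0 one has φ(t₀) < 0, and at a local maximum
point t₀ > 0 one has φ(t₀) > 0. -/
theorem local_extrema_sign_nonpositive_lambda
    (n : ℕ) (hn : 2 ≤ n) (lam q : ℝ) (hq : 1 < q) (hlam : lam ≤ 0)
    (φ φ' φ'' : ℝ → ℝ)
    (hd1 : ∀ t ∈ Ioi (0:ℝ), HasDerivAt φ (φ' t) t)
    (hd2 : ∀ t ∈ Ioi (0:ℝ), HasDerivAt φ' (φ'' t) t)
    (hode : ∀ t ∈ Ioi (0:ℝ),
      φ'' t + ((n : ℝ) - 1) * ((exp (2*t) + 1) / (exp (2*t) - 1)) * φ' t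
        = lam * φ t - |φ t| ^ (q - 1) * φ t)
    (hnontriv : ¬ (∀ t ∈ Ioi (0:ℝ), φ t = 0))
    (t₀ : ℝ) (ht₀ : 0 < t₀) :
    (IsLocalMin φ t₀ → φ t₀ < 0) ∧ (IsLocalMax φ t₀ → 0 < φ t₀) :=
  local_extrema_sign_nonpositive_lambda_general n lam q hq hlam φ φ' φ'' hd1 hd2 hode hnontriv t₀
    ht₀
end

section
/- Let φ be a nonconstant solution of the normalized equation EQ_λ on (0,∞) with φ(t) > 0 for all t > 0. If t₀ ∈ (0,∞) is a local minimum point of φ, then the energy satisfies E(t₀) < 0. -/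
open Real Set

/-- Second derivative test: at a local minimum in the interior region `Ioi 0`,
the second derivative is nonnegative. -/
lemma second_deriv_nonneg_at_local_min
    (φ φ' φ'' : ℝ → ℝ)
    (hd1 : ∀ t ∈ Ioi (0:ℝ), HasDerivAt φ (φ' t) t)
    (hd2 : HasDerivAt φ' (φ'' t₀) t₀)
    (ht₀ : 0 < t₀) (hmin : IsLocalMin φ t₀) (hz : φ' t₀ = 0) :
    0 ≤ φ'' t₀ := by
  by_contra hneg
  push_neg at hneg
  -- slope of φ' at t₀ tends to φ'' t₀ < 0, so φ' < 0 just to the right of t₀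
  have hslope : Filter.Tendsto (slope φ' t₀) (nhdsWithin t₀ {t₀}ᶜ) (nhds (φ'' t₀)) :=
    hasDerivAt_iff_tendsto_slope.1 hd2
  have hsr : Filter.Tendsto (slope φ' t₀) (nhdsWithin t₀ (Ioi t₀)) (nhds (φ'' t₀)) :=
    hslope.mono_left (nhdsWithin_mono _ (fun x hx => ne_of_gt hx))
  have hev : ∀ᶠ t in nhdsWithin t₀ (Ioi t₀), slope φ' t₀ t < 0 :=
    hsr.eventually (eventually_lt_nhds hneg)
  obtain ⟨a, ha, hIoo⟩ := (mem_nhdsGT_iff_exists_Ioo_subset).1 hev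
  -- local min neighborhood
  obtain ⟨ε, hε, hball⟩ := Metric.eventually_nhds_iff.1 hmin
  set t₁ := min (t₀ + ε / 2) ((t₀ + a) / 2) with ht₁def
  have ht₁gt : t₀ < t₁ := by
    apply lt_min <;> [linarith; (simp only [mem_Ioi] at ha; linarith)]
  have ht₁lta : t₁ < a := by
    have : (t₀ + a) / 2 < a := by simp only [mem_Ioi] at ha; linarith
    exact lt_of_le_of_lt (min_le_right _ _) this
  have hφ'neg : ∀ t ∈ Ioo t₀ t₁, φ' t < 0 := by
    intro t ht
    have hmem : t ∈ Ioo t₀ a := ⟨ht.1, lt_trans ht.2 ht₁lta⟩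
    have hs := hIoo hmem
    simp only [mem_setOf_eq, slope_def_field, div_neg_iff, hz] at hs
    rcases hs with ⟨h1, h2⟩ | ⟨h1, h2⟩ <;> [linarith [ht.1]; linarith]
  -- φ is strictly decreasing on [t₀, t₁]
  have hanti : StrictAntiOn φ (Icc t₀ t₁) := by
    apply strictAntiOn_of_deriv_neg (convex_Icc _ _)
    · intro x hx
      exact ((hd1 x (lt_of_lt_of_le ht₀ hx.1)).continuousAt).continuousWithinAt
    · intro x hx
      rw [interior_Icc] at hx
      rw [(hd1 x (lt_trans ht₀ hx.1)).deriv]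
      exact hφ'neg x hx
  have hlt : φ t₁ < φ t₀ :=
    hanti ⟨le_refl _, le_of_lt ht₁gt⟩ ⟨le_of_lt ht₁gt, le_refl _⟩ ht₁gt
  have hdist : dist t₁ t₀ < ε := by
    rw [Real.dist_eq, abs_of_pos (by linarith)]
    have : t₁ ≤ t₀ + ε / 2 := min_le_left _ _
    linarith
  exact absurd (hball hdist) (not_le.2 hlt)

/-- For a nonconstant positive solution φ of the normalized equation EQ_λ on (0,∞),
at any local minimum point t₀ > 0 the energy satisfies E(t₀) < 0. -/
theorem energy_negative_at_local_min
    (n : ℕ) (hn : 2 ≤ n) (lam q : ℝ) (hlam : 0 < lam) (hq : 1 < q)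
    (φ φ' φ'' : ℝ → ℝ)
    (hd1 : ∀ t ∈ Ioi (0:ℝ), HasDerivAt φ (φ' t) t)
    (hd2 : ∀ t ∈ Ioi (0:ℝ), HasDerivAt φ' (φ'' t) t)
    (hode : ∀ t ∈ Ioi (0:ℝ),
      φ'' t + ((n : ℝ) - 1) * ((exp (2*t) + 1) / (exp (2*t) - 1)) * φ' t
        = lam * (φ t - |φ t| ^ (q - 1) * φ t))
    (hpos : ∀ t ∈ Ioi (0:ℝ), 0 < φ t)
    (hnonconst : ¬ (∃ c : ℝ, ∀ t ∈ Ioi (0:ℝ), φ t = c))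
    (E : ℝ → ℝ)
    (hE : ∀ t, E t = (1/2) * (φ' t)^2 + lam * (|φ t| ^ (q + 1) / (q + 1) - (φ t)^2 / 2))
    (t₀ : ℝ) (ht₀ : 0 < t₀) (hmin : IsLocalMin φ t₀) :
    E t₀ < 0 := by
  have hz : φ' t₀ = 0 := hmin.hasDerivAt_eq_zero (hd1 t₀ ht₀)
  have h2 : 0 ≤ φ'' t₀ :=
    second_deriv_nonneg_at_local_min φ φ' φ'' hd1 (hd2 t₀ ht₀) ht₀ hmin hz
  set p := φ t₀ with hp
  have hppos : 0 < p := hpos t₀ ht₀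
  have habs : |p| = p := abs_of_pos hppos
  have hodet := hode t₀ ht₀
  rw [hz] at hodet
  have hrhs : 0 ≤ lam * (p - |p| ^ (q - 1) * p) := by
    rw [← hodet]; linarith
  have hfac : 0 ≤ p - p ^ (q - 1) * p := by
    rw [habs] at hrhs
    nlinarith
  have hple1 : p ≤ 1 := by
    by_contra hgt
    push_neg at hgt
    have : (1:ℝ) < p ^ (q - 1) :=
      Real.one_lt_rpow_iff_of_pos hppos |>.2 (Or.inl ⟨hgt, by linarith⟩)
    nlinarith
  -- p^(q+1) ≤ p^2, strictly smaller after dividing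
  have hpow : p ^ (q + 1) ≤ p ^ (2:ℝ) :=
    Real.rpow_le_rpow_of_exponent_ge hppos hple1 (by linarith)
  have hp2 : p ^ (2:ℝ) = p ^ 2 := by
    rw [show (2:ℝ) = ((2:ℕ):ℝ) by norm_num, Real.rpow_natCast]
  rw [hp2] at hpow
  have hq1 : (0:ℝ) < q + 1 := by linarith
  have hkey : p ^ (q + 1) / (q + 1) - p ^ 2 / 2 < 0 := by
    have h1 : p ^ (q + 1) / (q + 1) ≤ p ^ 2 / (q + 1) := by
      gcongr
    have h2 : p ^ 2 / (q + 1) < p ^ 2 / 2 := by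
      apply div_lt_div_of_pos_left (by positivity) (by norm_num) (by linarith)
    linarith
  rw [hE t₀, hz, habs]
  nlinarith
end

section
/- Let n ≥ 2 be an integer. For every continuously differentiable function φ : ℝ → ℝ with compact support, ∫₀^∞ φ'(t)²·sinh(t)^{n−1} dt ≥ ((n−1)²/4)·∫₀^∞ φ(t)²·sinh(t)^{n−1} dt. -/
/-!
For the weight `w = sinh^(n-1)` and `c = n - 1` one has `w' = c sinh^(n-2) cosh ≥ c w` on
`[0, ∞)`. Integrating `(φ² w)'` by parts turns this into `c ∫ φ² w ≤ -2 ∫ φ φ' w`, and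
`-2 c φ φ' ≤ 2 φ'² + (c²/2) φ²`, the difference being `2 (φ' + c φ / 2)²`. Hence
`c² ∫ φ² w ≤ 2 ∫ φ'² w + (c²/2) ∫ φ² w`.
-/

open Real Set MeasureTheory Filter

theorem Continuous.integrable_mul_of_hasCompactSupport {f g : ℝ → ℝ} (hf : Continuous f)
    (hfs : HasCompactSupport f) (hg : Continuous g) : Integrable (fun t => f t * g t) :=
  (hf.mul hg).integrable_of_hasCompactSupport hfs.mul_right

section WeightedPoincare

variable {φ w w' : ℝ → ℝ}

theorem integral_Ioi_sq_mul_deriv_eq (hφ : ContDiff ℝ 1 φ) (hsupp : HasCompactSupport φ)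
    (hw : ∀ t, HasDerivAt w (w' t) t) (hw' : Continuous w') :
    ∫ t in Ioi 0, φ t ^ 2 * w' t
      = -(φ 0 ^ 2 * w 0) - ∫ t in Ioi 0, 2 * φ t * deriv φ t * w t := by
  have hφc : Continuous φ := hφ.continuous
  have hwc : Continuous w := continuous_iff_continuousAt.2 fun t => (hw t).continuousAt
  have hsq : HasCompactSupport (fun t => φ t ^ 2) := hsupp.comp_left (g := (· ^ 2)) (by simp)
  have hφ2 : ∀ t, HasDerivAt (fun t => φ t ^ 2) (2 * φ t * deriv φ t) t := fun t => by
    simpa [mul_comm] using ((hφ.differentiable one_ne_zero t).hasDerivAt).fun_pow 2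
  have hφ2w : Continuous (fun t => φ t ^ 2 * w t) := (hφc.pow 2).mul hwc
  have h_infty : Tendsto (fun t => φ t ^ 2 * w t) atTop (nhds 0) :=
    (hsq.mul_right.is_zero_at_infty).mono_left atTop_le_cocompact
  rw [integral_Ioi_mul_deriv_eq_deriv_mul (fun t _ => hφ2 t) (fun t _ => hw t)
    ((hφc.pow 2).integrable_mul_of_hasCompactSupport hsq hw').integrableOn
    (((continuous_const.mul hφc).mul (hφ.continuous_deriv le_rfl)
      ).integrable_mul_of_hasCompactSupport hsupp.mul_left.mul_right hwc).integrableOn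
    (hφ2w.continuousAt.tendsto.mono_left nhdsWithin_le_nhds) h_infty]
  ring

theorem poincare_Ioi_of_mul_le_deriv {c : ℝ} (hc : 0 ≤ c) (hφ : ContDiff ℝ 1 φ)
    (hsupp : HasCompactSupport φ) (hw : ∀ t, HasDerivAt w (w' t) t) (hw' : Continuous w')
    (hw_nonneg : ∀ t ∈ Ici (0 : ℝ), 0 ≤ w t)
    (hcw : ∀ t ∈ Ioi (0 : ℝ), c * w t ≤ w' t) :
    c ^ 2 / 4 * ∫ t in Ioi 0, φ t ^ 2 * w t ≤ ∫ t in Ioi 0, deriv φ t ^ 2 * w t := by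
  have hφc : Continuous φ := hφ.continuous
  have hφ'c : Continuous (deriv φ) := hφ.continuous_deriv le_rfl
  have hwc : Continuous w := continuous_iff_continuousAt.2 fun t => (hw t).continuousAt
  have hsq : HasCompactSupport (fun t => φ t ^ 2) := hsupp.comp_left (g := (· ^ 2)) (by simp)
  have hA : Integrable (fun t => φ t ^ 2 * w t) :=
    (hφc.pow 2).integrable_mul_of_hasCompactSupport hsq hwc
  have hsq' : HasCompactSupport (fun t => deriv φ t ^ 2) :=
    (hsupp.deriv (𝕜 := ℝ)).comp_left (g := (· ^ 2)) (by simp)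
  have hB : Integrable (fun t => deriv φ t ^ 2 * w t) :=
    (hφ'c.pow 2).integrable_mul_of_hasCompactSupport hsq' hwc
  have hX : Integrable (fun t => 2 * φ t * deriv φ t * w t) :=
    ((continuous_const.mul hφc).mul hφ'c).integrable_mul_of_hasCompactSupport
      hsupp.mul_left.mul_right hwc
  set A := ∫ t in Ioi 0, φ t ^ 2 * w t
  set B := ∫ t in Ioi 0, deriv φ t ^ 2 * w t
  set X := ∫ t in Ioi 0, 2 * φ t * deriv φ t * w t
  have hA_le : c * A ≤ -X := calc
    c * A = ∫ t in Ioi 0, φ t ^ 2 * (c * w t) := by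
        rw [← integral_const_mul]; congr 1 with t; ring
    _ ≤ ∫ t in Ioi 0, φ t ^ 2 * w' t :=
        setIntegral_mono_on (hA.const_mul c |>.congr (.of_forall fun t => by ring)).integrableOn
          ((hφc.pow 2).integrable_mul_of_hasCompactSupport hsq hw').integrableOn
          measurableSet_Ioi fun t ht => by gcongr; exact hcw t ht
    _ = -(φ 0 ^ 2 * w 0) - X := integral_Ioi_sq_mul_deriv_eq hφ hsupp hw hw'
    _ ≤ -X := by linarith [mul_nonneg (sq_nonneg (φ 0)) (hw_nonneg 0 self_mem_Ici)]
  have hX_le : c * -X ≤ 2 * B + c ^ 2 / 2 * A := by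
    rw [← integral_neg, ← integral_const_mul, ← integral_const_mul, ← integral_const_mul,
      ← integral_add (hB.const_mul 2).integrableOn (hA.const_mul _).integrableOn]
    refine setIntegral_mono_on (hX.neg.const_mul c).integrableOn
      ((hB.const_mul 2).add (hA.const_mul _)).integrableOn measurableSet_Ioi fun t ht => ?_
    have hw_t : 0 ≤ w t := hw_nonneg t (Ioi_subset_Ici_self ht)
    linear_combination 2 * mul_nonneg (sq_nonneg (deriv φ t + c * φ t / 2)) hw_t
  linear_combination (1 / 2) * mul_le_mul_of_nonneg_left hA_le hc + (1 / 2) * hX_le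

end WeightedPoincare

theorem Real.natCast_mul_sinh_pow_le (m : ℕ) {t : ℝ} (ht : 0 ≤ t) :
    (m : ℝ) * sinh t ^ m ≤ m * sinh t ^ (m - 1) * cosh t := by
  rcases Nat.eq_zero_or_pos m with rfl | hm
  · simp
  · calc (m : ℝ) * sinh t ^ m = m * sinh t ^ (m - 1) * sinh t := by
          rw [mul_assoc, ← pow_succ, Nat.sub_add_cancel hm]
      _ ≤ m * sinh t ^ (m - 1) * cosh t := by gcongr; exact (sinh_lt_cosh t).le

/-- Radial Poincaré inequality on hyperbolic space: for every C¹ compactly supported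
φ : ℝ → ℝ and n ≥ 2,
∫₀^∞ φ'(t)² sinh(t)^{n−1} dt ≥ ((n−1)²/4) ∫₀^∞ φ(t)² sinh(t)^{n−1} dt. -/
theorem radial_poincare_hyperbolic
    (n : ℕ) (hn : 2 ≤ n) (φ : ℝ → ℝ)
    (hφ : ContDiff ℝ 1 φ) (hsupp : HasCompactSupport φ) :
    ((n : ℝ) - 1)^2 / 4 * ∫ t in Ioi (0:ℝ), (φ t)^2 * (sinh t)^(n - 1)
      ≤ ∫ t in Ioi (0:ℝ), (deriv φ t)^2 * (sinh t)^(n - 1) := by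
  obtain ⟨m, rfl⟩ : ∃ m, n = m + 1 := ⟨n - 1, by omega⟩
  rw [Nat.cast_succ, add_sub_cancel_right, Nat.add_sub_cancel]
  exact poincare_Ioi_of_mul_le_deriv m.cast_nonneg hφ hsupp (fun t => (hasDerivAt_sinh t).pow m)
    (by fun_prop) (fun t ht => pow_nonneg (sinh_nonneg_iff.2 ht) m)
    (fun t ht => Real.natCast_mul_sinh_pow_le m (le_of_lt ht))
end
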